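/- For CHSH-type boxes, the yield monotone M_CHSH satisfies: M_CHSH(R) = 2 if R is free, and M_CHSH(R) = CHSH_k(R) if R is nonfree, where k is the unique index with CHSH_k(R) > 2. Equivalently, for any box R with CHSH_k(R) > 2 and any LOSR operation τ taking CHSH-type boxes to CHSH-type boxes, CHSH_k(τ ∘ R) ≤ CHSH_k(R). -/

import Mathlib

open Finset

noncomputable section

abbrev Box : Type := Fin 2 → Fin 2 → Fin 2 → Fin 2 → ℝ

/-- A type-preserving operation on CHSH-type boxes: `τ x' y' s t x y s' t'`. -/
abbrev Op : Type :=
  Fin 2 → Fin 2 → Fin 2 → Fin 2 → Fin 2 → Fin 2 → Fin 2 → Fin 2 → ℝ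

def sgn : Fin 2 → ℝ := fun a => if a = 0 then 1 else -1

def corr (R : Box) (s t : Fin 2) : ℝ := ∑ x, ∑ y, sgn x * sgn y * R x y s t

def CHSH (R : Box) : ℝ := corr R 0 0 + corr R 1 0 + corr R 0 1 - corr R 1 1

def IsBox (R : Box) : Prop :=
  (∀ x y s t, 0 ≤ R x y s t) ∧ (∀ s t, ∑ x, ∑ y, R x y s t = 1) ∧
  (∀ x s t t', ∑ y, R x y s t = ∑ y, R x y s t') ∧
  (∀ y t s s', ∑ x, R x y s t = ∑ x, R x y s' t)

def IsFree (R : Box) : Prop :=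
  ∃ (n : ℕ) (p : Fin n → ℝ) (qA qB : Fin n → Fin 2 → Fin 2 → ℝ),
    (∀ i, 0 ≤ p i) ∧ (∑ i, p i = 1) ∧
    (∀ i x s, 0 ≤ qA i x s) ∧ (∀ i s, ∑ x, qA i x s = 1) ∧
    (∀ i y t, 0 ≤ qB i y t) ∧ (∀ i t, ∑ y, qB i y t = 1) ∧
    ∀ x y s t, R x y s t = ∑ i, p i * qA i x s * qB i y t

def IsSignPattern (σ : Fin 2 → Fin 2 → ℝ) : Prop :=
  (∀ s t, σ s t = 1 ∨ σ s t = -1) ∧ σ 0 0 * σ 1 0 * σ 0 1 * σ 1 1 = -1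

def CHSHk (σ : Fin 2 → Fin 2 → ℝ) (R : Box) : ℝ := ∑ s, ∑ t, σ s t * corr R s t

/-- An LOSR operation (local operations and shared randomness). -/
def IsLOSR (τ : Op) : Prop :=
  ∃ (n : ℕ) (p : Fin n → ℝ)
    (pA pB : Fin n → Fin 2 → Fin 2 → Fin 2 → Fin 2 → ℝ),
    (∀ i, 0 ≤ p i) ∧ (∑ i, p i = 1) ∧
    (∀ i x' s x s', 0 ≤ pA i x' s x s') ∧
    (∀ i x s', ∑ x', ∑ s, pA i x' s x s' = 1) ∧
    (∀ i y' t y t', 0 ≤ pB i y' t y t') ∧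
    (∀ i y t', ∑ y', ∑ t, pB i y' t y t' = 1) ∧
    (∀ i x₁ x₂ s s', ∑ x', pA i x' s x₁ s' = ∑ x', pA i x' s x₂ s') ∧
    (∀ i y₁ y₂ t t', ∑ y', pB i y' t y₁ t' = ∑ y', pB i y' t y₂ t') ∧
    (∀ x' y' s t x y s' t',
      τ x' y' s t x y s' t' = ∑ i, p i * pA i x' s x s' * pB i y' t y t')

def applyOp (τ : Op) (R : Box) : Box := fun x' y' s' t' =>
  ∑ x, ∑ y, ∑ s, ∑ t, τ x' y' s t x y s' t' * R x y s t

def Conv (R R' : Box) : Prop := ∃ τ : Op, IsLOSR τ ∧ applyOp τ R = R'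

/-- The CHSH-yield monotone. -/
def MCHSH (R : Box) : ℝ := sSup {c : ℝ | ∃ R', Conv R R' ∧ c = CHSH R'}

/-!
If `CHSHk σ R = 2 + 2λ` with `0 ≤ λ < 1`, then `R = λ • PR_σ + (1 - λ) • L`, where the remainder `L`
is a no-signalling box satisfying all eight CHSH inequalities, hence free by Fine's theorem. LOSR
operations act linearly, keep free boxes free (where every CHSH functional is at most `2`) and keep
boxes normalised (where it is at most `4`), so every CHSH functional of `τ R` is at most
`4λ + 2(1 - λ) = CHSHk σ R`. Relabelling outputs turns `CHSHk σ` into `CHSH`, so this value is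
attained; free boxes reach only `2`, which a deterministic box attains.

Fine's theorem is proved by a coupling. For each input of Bob, the joint law of Alice's two outputs
and Bob's output is, for each output of Bob, a `2 × 2` table with prescribed margins and one free
entry; the CHSH inequalities are exactly what lets these entries be chosen so that both of Bob's
inputs induce the same law of Alice's outputs, and the two tables are then glued along it.
-/

@[simp] lemma sgn_zero : sgn 0 = 1 := rfl
@[simp] lemma sgn_one : sgn 1 = -1 := rfl

lemma sgn_eq_one_or_eq_neg_one (a : Fin 2) : sgn a = 1 ∨ sgn a = -1 := by
  fin_cases a <;> simp

lemma corr_eq (R : Box) (s t : Fin 2) :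
    corr R s t = R 0 0 s t - R 0 1 s t - R 1 0 s t + R 1 1 s t := by
  simp only [corr, Fin.sum_univ_two, sgn_zero, sgn_one]; ring

lemma CHSHk_eq (σ : Fin 2 → Fin 2 → ℝ) (R : Box) :
    CHSHk σ R = σ 0 0 * corr R 0 0 + σ 0 1 * corr R 0 1 + σ 1 0 * corr R 1 0
      + σ 1 1 * corr R 1 1 := by
  simp only [CHSHk, Fin.sum_univ_two]; ring

lemma CHSHk_add_smul (σ : Fin 2 → Fin 2 → ℝ) (a b : ℝ) (P Q : Box) :
    CHSHk σ (a • P + b • Q) = a * CHSHk σ P + b * CHSHk σ Q := by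
  simp only [CHSHk_eq, corr_eq, Pi.add_apply, Pi.smul_apply, smul_eq_mul]; ring

lemma abs_corr_le_one {R : Box} (h0 : ∀ x y s t, 0 ≤ R x y s t)
    (h1 : ∀ s t, ∑ x, ∑ y, R x y s t = 1) (s t : Fin 2) : |corr R s t| ≤ 1 := by
  have hn := h1 s t
  simp only [Fin.sum_univ_two] at hn
  rw [corr_eq, abs_le]
  constructor <;> linarith [h0 0 0 s t, h0 0 1 s t, h0 1 0 s t, h0 1 1 s t]

lemma IsSignPattern.CHSHk_le_four {σ : Fin 2 → Fin 2 → ℝ} (hσ : IsSignPattern σ) {R : Box}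
    (h0 : ∀ x y s t, 0 ≤ R x y s t) (h1 : ∀ s t, ∑ x, ∑ y, R x y s t = 1) :
    CHSHk σ R ≤ 4 := by
  have hterm : ∀ s t, σ s t * corr R s t ≤ 1 := fun s t => by
    have := abs_le.1 (abs_corr_le_one h0 h1 s t)
    rcases hσ.1 s t with h | h <;> rw [h] <;> linarith
  rw [CHSHk_eq]
  linarith [hterm 0 0, hterm 0 1, hterm 1 0, hterm 1 1]

def chshPattern : Fin 2 → Fin 2 → ℝ := ![![1, 1], ![1, -1]]

lemma CHSH_eq_CHSHk (R : Box) : CHSH R = CHSHk chshPattern R := by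
  simp only [CHSH, CHSHk_eq, chshPattern, Matrix.cons_val_zero, Matrix.cons_val_one]; ring

lemma isSignPattern_chshPattern : IsSignPattern chshPattern := by
  norm_num [IsSignPattern, chshPattern, Fin.forall_fin_two]

lemma IsSignPattern.exists_eq_mul {σ : Fin 2 → Fin 2 → ℝ} (hσ : IsSignPattern σ) :
    ∃ f g : Fin 2 → Fin 2, ∀ s t, σ s t = chshPattern s t * sgn (f s) * sgn (g t) := by
  have hprod := hσ.2
  refine ⟨![0, if σ 1 0 = σ 0 0 then 0 else 1], fun t => if σ 0 t = 1 then 0 else 1, ?_⟩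
  rcases hσ.1 0 0 with h00 | h00 <;> rcases hσ.1 0 1 with h01 | h01 <;>
    rcases hσ.1 1 0 with h10 | h10 <;> rcases hσ.1 1 1 with h11 | h11 <;>
    rw [h00, h01, h10, h11] at hprod <;> norm_num at hprod <;>
    intro s t <;> fin_cases s <;> fin_cases t <;> norm_num [chshPattern, h00, h01, h10, h11]

lemma chshPattern_bilinear_le_two (a b : Fin 2 → ℝ) (ha : ∀ s, |a s| ≤ 1) (hb : ∀ t, |b t| ≤ 1) :
    ∑ s, ∑ t, chshPattern s t * (a s * b t) ≤ 2 := by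
  have hmul : ∀ s u, a s * u ≤ |u| := fun s u =>
    (le_abs_self _).trans (by rw [abs_mul]; exact mul_le_of_le_one_left (abs_nonneg u) (ha s))
  obtain ⟨hb0, hb0'⟩ := abs_le.1 (hb 0)
  obtain ⟨hb1, hb1'⟩ := abs_le.1 (hb 1)
  have hsum : |b 0 + b 1| + |b 0 - b 1| ≤ 2 := by
    rcases abs_cases (b 0 + b 1) with ⟨hp, _⟩ | ⟨hp, _⟩ <;>
      rcases abs_cases (b 0 - b 1) with ⟨hm, _⟩ | ⟨hm, _⟩ <;> linarith
  calc ∑ s, ∑ t, chshPattern s t * (a s * b t) = a 0 * (b 0 + b 1) + a 1 * (b 0 - b 1) := by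
        simp only [chshPattern, Fin.sum_univ_two, Matrix.cons_val_zero, Matrix.cons_val_one]
        ring
    _ ≤ 2 := by linarith [hmul 0 (b 0 + b 1), hmul 1 (b 0 - b 1)]

lemma IsSignPattern.bilinear_le_two {σ : Fin 2 → Fin 2 → ℝ} (hσ : IsSignPattern σ)
    (a b : Fin 2 → ℝ) (ha : ∀ s, |a s| ≤ 1) (hb : ∀ t, |b t| ≤ 1) :
    ∑ s, ∑ t, σ s t * (a s * b t) ≤ 2 := by
  obtain ⟨f, g, hfg⟩ := hσ.exists_eq_mul
  have habs : ∀ (c : Fin 2 → ℝ) (h : Fin 2 → Fin 2), (∀ s, |c s| ≤ 1) →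
      ∀ s, |sgn (h s) * c s| ≤ 1 := fun c h hc s => by
    rcases sgn_eq_one_or_eq_neg_one (h s) with e | e <;> simpa [e] using hc s
  convert chshPattern_bilinear_le_two _ _ (habs a f ha) (habs b g hb) using 3
  simp only [hfg]; ring

lemma isFree_of_fintype {ι : Type*} [Fintype ι] {R : Box} (p : ι → ℝ)
    (qA qB : ι → Fin 2 → Fin 2 → ℝ) (hp : ∀ i, 0 ≤ p i) (hp1 : ∑ i, p i = 1)
    (hA : ∀ i x s, 0 ≤ qA i x s) (hA1 : ∀ i s, ∑ x, qA i x s = 1)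
    (hB : ∀ i y t, 0 ≤ qB i y t) (hB1 : ∀ i t, ∑ y, qB i y t = 1)
    (hR : ∀ x y s t, R x y s t = ∑ i, p i * qA i x s * qB i y t) : IsFree R := by
  let e := (Fintype.equivFin ι).symm
  refine ⟨Fintype.card ι, p ∘ e, qA ∘ e, qB ∘ e, fun k => hp _, ?_, fun k => hA _,
    fun k => hA1 _, fun k => hB _, fun k => hB1 _, fun x y s t => ?_⟩
  · rw [← hp1]; exact e.sum_comp p
  · rw [hR]; exact (e.sum_comp fun i => p i * qA i x s * qB i y t).symm

lemma IsFree.CHSHk_le_two {L : Box} (hL : IsFree L) {σ : Fin 2 → Fin 2 → ℝ}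
    (hσ : IsSignPattern σ) : CHSHk σ L ≤ 2 := by
  obtain ⟨n, p, qA, qB, hp, hp1, hA0, hA1, hB0, hB1, hrep⟩ := hL
  have hcorr : ∀ s t, corr L s t
      = ∑ i, p i * ((qA i 0 s - qA i 1 s) * (qB i 0 t - qB i 1 t)) := fun s t => by
    simp only [corr_eq, hrep, ← Finset.sum_sub_distrib, ← Finset.sum_add_distrib]
    exact Finset.sum_congr rfl fun i _ => by ring
  have hmarg : ∀ (q : Fin n → Fin 2 → Fin 2 → ℝ), (∀ i x s, 0 ≤ q i x s) →
      (∀ i s, ∑ x, q i x s = 1) → ∀ i s, |q i 0 s - q i 1 s| ≤ 1 := fun q h0 h1 i s => by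
    have := h1 i s
    simp only [Fin.sum_univ_two] at this
    rw [abs_le]; constructor <;> linarith [h0 i 0 s, h0 i 1 s]
  calc CHSHk σ L
      = ∑ i, p i * ∑ s, ∑ t, σ s t * ((qA i 0 s - qA i 1 s) * (qB i 0 t - qB i 1 t)) := by
        simp only [CHSHk, hcorr, Finset.mul_sum, Fin.sum_univ_two, ← Finset.sum_add_distrib]
        exact Finset.sum_congr rfl fun i _ => by ring
    _ ≤ ∑ i, p i * 2 := Finset.sum_le_sum fun i _ => mul_le_mul_of_nonneg_left
        (hσ.bilinear_le_two _ _ (hmarg qA hA0 hA1 i) (hmarg qB hB0 hB1 i)) (hp i)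
    _ = 2 := by rw [← Finset.sum_mul, hp1, one_mul]

lemma applyOp_smul_add_smul (τ : Op) (a b : ℝ) (P Q : Box) :
    applyOp τ (a • P + b • Q) = a • applyOp τ P + b • applyOp τ Q := by
  funext x' y' s' t'
  simp only [applyOp, Pi.add_apply, Pi.smul_apply, smul_eq_mul, Fin.sum_univ_two]
  ring

lemma IsLOSR.applyOp_nonneg {τ : Op} (hτ : IsLOSR τ) {R : Box} (h0 : ∀ x y s t, 0 ≤ R x y s t)
    (x' y' s' t' : Fin 2) : 0 ≤ applyOp τ R x' y' s' t' := by
  obtain ⟨n, p, pA, pB, hp, -, hA, -, hB, -, -, -, hτ⟩ := hτ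
  refine sum_nonneg fun x _ => sum_nonneg fun y _ => sum_nonneg fun s _ =>
    sum_nonneg fun t _ => mul_nonneg ?_ (h0 x y s t)
  rw [hτ]
  exact sum_nonneg fun i _ => mul_nonneg (mul_nonneg (hp i) (hA i x' s x s')) (hB i y' t y t')

lemma IsLOSR.sum_applyOp {τ : Op} (hτ : IsLOSR τ) {R : Box}
    (h1 : ∀ s t, ∑ x, ∑ y, R x y s t = 1) (s' t' : Fin 2) :
    ∑ x', ∑ y', applyOp τ R x' y' s' t' = 1 := by
  obtain ⟨n, p, pA, pB, -, hp1, -, hA1, -, hB1, hAx, hBy, hτ⟩ := hτ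
  have hmarg : ∀ x y s t, ∑ x', ∑ y', τ x' y' s t x y s' t'
      = ∑ i, p i * (∑ x', pA i x' s x s') * ∑ y', pB i y' t y t' := fun x y s t => by
    simp only [hτ, Fin.sum_univ_two, ← Finset.sum_add_distrib]
    exact Finset.sum_congr rfl fun i _ => by ring
  calc ∑ x', ∑ y', applyOp τ R x' y' s' t'
      = ∑ x, ∑ y, ∑ s, ∑ t, (∑ x', ∑ y', τ x' y' s t x y s' t') * R x y s t := by
        simp only [applyOp, Fin.sum_univ_two]; ring
    _ = ∑ s, ∑ t, (∑ i, p i * (∑ x', pA i x' s 0 s') * ∑ y', pB i y' t 0 t') *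
          ∑ x, ∑ y, R x y s t := by
        simp only [hmarg]
        simp only [hAx _ _ 0, hBy _ _ 0]
        simp only [Fin.sum_univ_two]; ring
    _ = ∑ i, p i * (∑ x', ∑ s, pA i x' s 0 s') * ∑ y', ∑ t, pB i y' t 0 t' := by
        simp only [h1, mul_one]
        simp only [Fin.sum_univ_two, ← Finset.sum_add_distrib]
        exact Finset.sum_congr rfl fun i _ => by ring
    _ = 1 := by simp only [hA1, hB1, mul_one, hp1]

lemma sum_comp_local_eq_one (a : Fin 2 → Fin 2 → Fin 2 → ℝ) (q : Fin 2 → Fin 2 → ℝ)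
    (ha : ∀ x₁ x₂ s, ∑ x', a x' s x₁ = ∑ x', a x' s x₂) (ha1 : ∑ x', ∑ s, a x' s 0 = 1)
    (hq : ∀ s, ∑ x, q x s = 1) :
    ∑ x', ∑ x, ∑ s, a x' s x * q x s = 1 := by
  calc ∑ x', ∑ x, ∑ s, a x' s x * q x s
      = ∑ x, ∑ s, (∑ x', a x' s x) * q x s := by simp only [Fin.sum_univ_two]; ring
    _ = ∑ s, (∑ x', a x' s 0) * ∑ x, q x s := by
        simp only [ha _ 0]; simp only [Fin.sum_univ_two]; ring
    _ = 1 := by simp only [hq, mul_one]; rw [Finset.sum_comm, ha1]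

lemma IsLOSR.isFree_applyOp {τ : Op} (hτ : IsLOSR τ) {R : Box} (hR : IsFree R) :
    IsFree (applyOp τ R) := by
  obtain ⟨n, p, pA, pB, hp, hp1, hA, hA1, hB, hB1, hAx, hBy, hτ⟩ := hτ
  obtain ⟨m, q, qA, qB, hq, hq1, hqA, hqA1, hqB, hqB1, hR⟩ := hR
  refine isFree_of_fintype (ι := Fin n × Fin m) (fun k => p k.1 * q k.2)
    (fun k x' s' => ∑ x, ∑ s, pA k.1 x' s x s' * qA k.2 x s)
    (fun k y' t' => ∑ y, ∑ t, pB k.1 y' t y t' * qB k.2 y t)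
    (fun k => mul_nonneg (hp _) (hq _)) ?_
    (fun k x' s' => sum_nonneg fun x _ => sum_nonneg fun s _ => mul_nonneg (hA ..) (hqA ..))
    (fun k s' => sum_comp_local_eq_one (fun x' s x => pA k.1 x' s x s') (qA k.2)
      (fun x₁ x₂ s => hAx _ x₁ x₂ s s') (hA1 _ 0 s') (hqA1 k.2))
    (fun k y' t' => sum_nonneg fun y _ => sum_nonneg fun t _ => mul_nonneg (hB ..) (hqB ..))
    (fun k t' => sum_comp_local_eq_one (fun y' t y => pB k.1 y' t y t') (qB k.2)
      (fun y₁ y₂ t => hBy _ y₁ y₂ t t') (hB1 _ 0 t') (hqB1 k.2)) ?_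
  · rw [Fintype.sum_prod_type, ← hp1]
    simp only [← Finset.mul_sum, hq1, mul_one]
  · intro x' y' s' t'
    simp only [applyOp, hτ, hR, Fintype.sum_prod_type, Finset.sum_mul_sum, Fin.sum_univ_two,
      ← Finset.sum_add_distrib]
    exact Finset.sum_congr rfl fun i _ => Finset.sum_congr rfl fun j _ => by ring

lemma conv_deterministic (R : Box) (fA fB : Fin 2 → Fin 2 → Fin 2) (gA gB : Fin 2 → Fin 2) :
    Conv R (fun x' y' s' t' => ∑ x, ∑ y,
      if x' = fA x s' ∧ y' = fB y t' then R x y (gA s') (gB t') else 0) := by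
  refine ⟨fun x' y' s t x y s' t' => (if s = gA s' ∧ x' = fA x s' then 1 else 0) *
      (if t = gB t' ∧ y' = fB y t' then 1 else 0),
    ⟨1, fun _ => 1, fun _ x' s x s' => if s = gA s' ∧ x' = fA x s' then 1 else 0,
      fun _ y' t y t' => if t = gB t' ∧ y' = fB y t' then 1 else 0, ?_⟩, ?_⟩
  · refine ⟨fun _ => zero_le_one, by simp, fun _ _ _ _ _ => ?_, fun _ _ _ => ?_,
      fun _ _ _ _ _ => ?_, fun _ _ _ => ?_, fun _ _ _ _ _ => ?_, fun _ _ _ _ _ => ?_,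
      fun _ _ _ _ _ _ _ _ => by simp⟩ <;> dsimp only <;>
      first | (split_ifs <;> norm_num) | simp [ite_and]
  · funext x' y' s' t'
    simp only [applyOp, ite_and, mul_ite, mul_one, mul_zero, ite_mul, one_mul, zero_mul,
      sum_ite_eq', mem_univ, if_true, sum_ite_irrel, sum_const_zero, Fin.sum_univ_two]
    split_ifs <;> ring

lemma exists_conv_CHSH_eq_two (R : Box) (hR : ∀ s t, ∑ x, ∑ y, R x y s t = 1) :
    ∃ R', Conv R R' ∧ CHSH R' = 2 := by
  refine ⟨_, conv_deterministic R (fun _ _ => 0) (fun _ _ => 0) (fun _ => 0) (fun _ => 0), ?_⟩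
  have h := hR 0 0
  simp only [Fin.sum_univ_two] at h
  simp only [CHSH, corr, sum_ite_irrel, Fin.sum_univ_two, sum_const_zero, mul_ite, mul_zero,
    and_true, and_false, sgn_zero, mul_one, one_ne_zero, if_true, if_false, add_zero,
    sum_ite_eq', mem_univ, one_mul]
  linarith

lemma fin_two_eq_add_iff (a b c : Fin 2) : a = b + c ↔ b = a + c := by
  revert a b c; decide

def relabel (R : Box) (f g : Fin 2 → Fin 2) : Box := fun x y s t => R (x + f s) (y + g t) s t

lemma corr_relabel (R : Box) (f g : Fin 2 → Fin 2) (s t : Fin 2) :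
    corr (relabel R f g) s t = sgn (f s) * sgn (g t) * corr R s t := by
  simp only [corr_eq, relabel]
  generalize f s = a; generalize g t = b
  fin_cases a <;> fin_cases b <;>
    simp only [Fin.zero_eta, Fin.mk_one, add_zero, Fin.reduceAdd, sgn_zero, sgn_one] <;> ring

lemma conv_relabel (R : Box) (f g : Fin 2 → Fin 2) : Conv R (relabel R f g) := by
  convert conv_deterministic R (fun x s => x + f s) (fun y t => y + g t) id id using 1
  funext x' y' s' t'
  simp [relabel, fin_two_eq_add_iff x', fin_two_eq_add_iff y', ite_and]

lemma IsSignPattern.exists_conv_CHSH_eq {σ : Fin 2 → Fin 2 → ℝ} (hσ : IsSignPattern σ) (R : Box) :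
    ∃ R', Conv R R' ∧ CHSH R' = CHSHk σ R := by
  obtain ⟨f, g, hfg⟩ := hσ.exists_eq_mul
  refine ⟨relabel R f g, conv_relabel R f g, ?_⟩
  simp only [CHSH_eq_CHSHk, CHSHk, corr_relabel, hfg, mul_assoc]

lemma IsBox.sum_eq_one {R : Box} (hR : IsBox R) (s t : Fin 2) :
    R 0 0 s t + R 0 1 s t + R 1 0 s t + R 1 1 s t = 1 := by
  have := hR.2.1 s t
  simp only [Fin.sum_univ_two] at this
  linarith

lemma IsBox.marginal_fst {R : Box} (hR : IsBox R) (x s : Fin 2) :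
    R x 0 s 0 + R x 1 s 0 = R x 0 s 1 + R x 1 s 1 := by
  simpa only [Fin.sum_univ_two] using hR.2.2.1 x s 0 1

lemma IsBox.marginal_snd {R : Box} (hR : IsBox R) (y t : Fin 2) :
    R 0 y 0 t + R 1 y 0 t = R 0 y 1 t + R 1 y 1 t := by
  simpa only [Fin.sum_univ_two] using hR.2.2.2 y t 0 1

lemma exists_glue_of_sum_eq {α β γ : Type*} [Fintype β] [Fintype γ] (f : α → β → ℝ) (g : α → γ → ℝ)
    (hf : ∀ a b, 0 ≤ f a b) (hg : ∀ a c, 0 ≤ g a c) (hfg : ∀ a, ∑ b, f a b = ∑ c, g a c) :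
    ∃ J : α → β → γ → ℝ, (∀ a b c, 0 ≤ J a b c) ∧ (∀ a b, ∑ c, J a b c = f a b) ∧
      (∀ a c, ∑ b, J a b c = g a c) := by
  refine ⟨fun a b c => f a b * g a c / ∑ b, f a b,
    fun a b c => div_nonneg (mul_nonneg (hf a b) (hg a c)) (sum_nonneg fun b _ => hf a b),
    fun a b => ?_, fun a c => ?_⟩ <;> by_cases hm : ∑ b, f a b = 0
  -- Where the common marginal vanishes so do `f` and `g`, and the junk value `x / 0 = 0` is right.
  · simp [(Finset.sum_eq_zero_iff_of_nonneg fun b _ => hf a b).1 hm b]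
  · rw [← Finset.sum_div, ← Finset.mul_sum, ← hfg, mul_div_assoc, div_self hm, mul_one]
  · rw [hfg] at hm
    simp [(Finset.sum_eq_zero_iff_of_nonneg fun c _ => hg a c).1 hm c]
  · rw [← Finset.sum_div, ← Finset.sum_mul, mul_div_right_comm, div_self hm, one_mul]

lemma exists_mem_Icc_add_eq {lo hi : Fin 2 → ℝ} (h : ∀ b, lo b ≤ hi b) {z : ℝ}
    (hlo : lo 0 + lo 1 ≤ z) (hhi : z ≤ hi 0 + hi 1) :
    ∃ w : Fin 2 → ℝ, (∀ b, w b ∈ Set.Icc (lo b) (hi b)) ∧ w 0 + w 1 = z := by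
  refine ⟨![max (lo 0) (z - hi 1), z - max (lo 0) (z - hi 1)], fun b => ?_, by simp⟩
  have := h 0
  have := h 1
  rcases max_cases (lo 0) (z - hi 1) with ⟨hm, _⟩ | ⟨hm, _⟩ <;> rw [hm] <;>
    fin_cases b <;> simp <;> (try constructor) <;> linarith

lemma IsBox.max_add_max_le_min_add_min {L : Box} (hL : IsBox L)
    (hC : ∀ σ, IsSignPattern σ → CHSHk σ L ≤ 2) (u u' : Fin 2) :
    max 0 (L 0 0 1 u - L 1 0 0 u) + max 0 (L 0 1 1 u - L 1 1 0 u)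
      ≤ min (L 0 0 0 u') (L 0 0 1 u') + min (L 0 1 0 u') (L 0 1 1 u') := by
  have hC' : ∀ a b c d : ℝ, IsSignPattern ![![a, b], ![c, d]] →
      a * corr L 0 0 + b * corr L 0 1 + c * corr L 1 0 + d * corr L 1 1 ≤ 2 :=
    fun a b c d h => by simpa [CHSHk_eq] using hC _ h
  have c1 := hC' 1 1 1 (-1) (by norm_num [IsSignPattern, Fin.forall_fin_two])
  have c2 := hC' 1 1 (-1) 1 (by norm_num [IsSignPattern, Fin.forall_fin_two])
  have c3 := hC' 1 (-1) 1 1 (by norm_num [IsSignPattern, Fin.forall_fin_two])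
  have c4 := hC' (-1) 1 1 1 (by norm_num [IsSignPattern, Fin.forall_fin_two])
  have c5 := hC' (-1) (-1) (-1) 1 (by norm_num [IsSignPattern, Fin.forall_fin_two])
  have c6 := hC' (-1) (-1) 1 (-1) (by norm_num [IsSignPattern, Fin.forall_fin_two])
  have c7 := hC' (-1) 1 (-1) (-1) (by norm_num [IsSignPattern, Fin.forall_fin_two])
  have c8 := hC' 1 (-1) (-1) (-1) (by norm_num [IsSignPattern, Fin.forall_fin_two])
  simp only [corr_eq] at c1 c2 c3 c4 c5 c6 c7 c8
  have h0 := hL.1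
  have e := hL.sum_eq_one
  have a := hL.marginal_fst
  have b := hL.marginal_snd
  revert u u'
  simp only [Fin.forall_fin_two, max_def, min_def]
  -- For `u ≠ u'` each case of the `max`/`min` is one of the eight CHSH inequalities.
  refine ⟨⟨?_, ?_⟩, ?_, ?_⟩ <;> split_ifs <;>
    linarith [h0 0 0 0 0, h0 0 1 0 0, h0 1 0 0 0, h0 1 1 0 0,
      h0 0 0 0 1, h0 0 1 0 1, h0 1 0 0 1, h0 1 1 0 1,
      h0 0 0 1 0, h0 0 1 1 0, h0 1 0 1 0, h0 1 1 1 0,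
      h0 0 0 1 1, h0 0 1 1 1, h0 1 0 1 1, h0 1 1 1 1,
      e 0 0, e 0 1, e 1 0, e 1 1, a 0 0, a 0 1, a 1 0, a 1 1, b 0 0, b 0 1, b 1 0, b 1 1]

lemma IsBox.exists_coupling {L : Box} (hL : IsBox L)
    (hC : ∀ σ, IsSignPattern σ → CHSHk σ L ≤ 2) :
    ∃ T : Fin 2 → Fin 2 → Fin 2 → Fin 2 → ℝ, (∀ u a₀ a₁ b, 0 ≤ T u a₀ a₁ b) ∧
      (∀ u a₀ b, ∑ a₁, T u a₀ a₁ b = L a₀ b 0 u) ∧ (∀ u a₁ b, ∑ a₀, T u a₀ a₁ b = L a₁ b 1 u) ∧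
      (∀ a₀ a₁, ∑ b, T 0 a₀ a₁ b = ∑ b, T 1 a₀ a₁ b) := by
  -- For Bob's input `u` and output `b`, a table `(a₀, a₁) ↦ T u a₀ a₁ b` with the required margins
  -- is fixed by its entry `w u b` at `(0, 0)`, which may be anything in `[lo u b, hi u b]`.
  let lo : Fin 2 → Fin 2 → ℝ := fun u b => max 0 (L 0 b 1 u - L 1 b 0 u)
  let hi : Fin 2 → Fin 2 → ℝ := fun u b => min (L 0 b 0 u) (L 0 b 1 u)
  have hlohi : ∀ u b, lo u b ≤ hi u b := fun u b =>
    max_le (le_min (hL.1 ..) (hL.1 ..)) (le_min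
      (by linarith [hL.marginal_snd b u, hL.1 1 b 1 u]) (by linarith [hL.1 1 b 0 u]))
  let z := max (lo 0 0 + lo 0 1) (lo 1 0 + lo 1 1)
  have hz : ∀ u, lo u 0 + lo u 1 ≤ z ∧ z ≤ hi u 0 + hi u 1 := by
    refine fun u => ⟨?_, max_le (hL.max_add_max_le_min_add_min hC 0 u)
      (hL.max_add_max_le_min_add_min hC 1 u)⟩
    fin_cases u
    exacts [le_max_left _ _, le_max_right _ _]
  choose w hw hwz using fun u => exists_mem_Icc_add_eq (hlohi u) (hz u).1 (hz u).2
  refine ⟨fun u a₀ a₁ b => ![![w u b, L 0 b 0 u - w u b],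
    ![L 0 b 1 u - w u b, L 1 b 1 u - L 0 b 0 u + w u b]] a₀ a₁, ?_, ?_, ?_, ?_⟩
  · intro u a₀ a₁ b
    obtain ⟨hlo, hhi⟩ := hw u b
    have := le_max_left 0 (L 0 b 1 u - L 1 b 0 u)
    have := le_max_right 0 (L 0 b 1 u - L 1 b 0 u)
    have := min_le_left (L 0 b 0 u) (L 0 b 1 u)
    have := min_le_right (L 0 b 0 u) (L 0 b 1 u)
    have := hL.marginal_snd b u
    fin_cases a₀ <;> fin_cases a₁ <;> simp <;> linarith
  · intro u a₀ b
    fin_cases a₀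
    · simp [Fin.sum_univ_two]
    · simp [Fin.sum_univ_two]; linarith [hL.marginal_snd b u]
  · intro u a₁ b
    fin_cases a₁ <;> simp [Fin.sum_univ_two]
  · intro a₀ a₁
    have := hwz 0
    have := hwz 1
    have := hL.marginal_fst 0 0
    have := hL.marginal_fst 0 1
    have := hL.marginal_fst 1 1
    fin_cases a₀ <;> fin_cases a₁ <;> simp [Fin.sum_univ_two] <;> linarith

lemma IsBox.isFree_of_CHSHk_le_two {L : Box} (hL : IsBox L)
    (hC : ∀ σ, IsSignPattern σ → CHSHk σ L ≤ 2) : IsFree L := by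
  obtain ⟨T, hT, hTfst, hTsnd, hTeq⟩ := hL.exists_coupling hC
  obtain ⟨J, hJ, hJ₀, hJ₁⟩ := exists_glue_of_sum_eq (α := Fin 2 × Fin 2)
    (fun a b => T 0 a.1 a.2 b) (fun a b => T 1 a.1 a.2 b)
    (fun a b => hT ..) (fun a b => hT ..) (fun a => hTeq a.1 a.2)
  refine isFree_of_fintype (ι := (Fin 2 × Fin 2) × Fin 2 × Fin 2) (fun k => J k.1 k.2.1 k.2.2)
    (fun k x s => if ![k.1.1, k.1.2] s = x then 1 else 0)
    (fun k y t => if ![k.2.1, k.2.2] t = y then 1 else 0)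
    (fun k => hJ ..) ?_ (fun _ _ _ => by positivity) (fun _ _ => by simp)
    (fun _ _ _ => by positivity) (fun _ _ => by simp) ?_
  · simp only [Fintype.sum_prod_type, hJ₀, ← hL.2.1 0 0, ← hTfst]
    exact Finset.sum_congr rfl fun _ _ => Finset.sum_comm
  · have hJ₀' := fun a₀ a₁ b => hJ₀ (a₀, a₁) b
    have hJ₁' := fun a₀ a₁ b => hJ₁ (a₀, a₁) b
    simp only [Fin.sum_univ_two] at hJ₀' hJ₁' hTfst hTsnd
    intro x y s t
    simp only [Fintype.sum_prod_type, Fin.sum_univ_two]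
    fin_cases x <;> fin_cases y <;> fin_cases s <;> fin_cases t <;> simp <;>
      linarith [hJ₀' 0 0 0, hJ₀' 0 0 1, hJ₀' 0 1 0, hJ₀' 0 1 1, hJ₀' 1 0 0, hJ₀' 1 0 1,
        hJ₀' 1 1 0, hJ₀' 1 1 1, hJ₁' 0 0 0, hJ₁' 0 0 1, hJ₁' 0 1 0, hJ₁' 0 1 1, hJ₁' 1 0 0,
        hJ₁' 1 0 1, hJ₁' 1 1 0, hJ₁' 1 1 1, hTfst 0 0 0, hTfst 0 0 1, hTfst 0 1 0, hTfst 0 1 1,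
        hTfst 1 0 0, hTfst 1 0 1, hTfst 1 1 0, hTfst 1 1 1, hTsnd 0 0 0, hTsnd 0 0 1,
        hTsnd 0 1 0, hTsnd 0 1 1, hTsnd 1 0 0, hTsnd 1 0 1, hTsnd 1 1 0, hTsnd 1 1 1]

def prBox (σ : Fin 2 → Fin 2 → ℝ) : Box := fun x y s t => (1 + sgn x * sgn y * σ s t) / 4

lemma corr_prBox (σ : Fin 2 → Fin 2 → ℝ) (s t : Fin 2) : corr (prBox σ) s t = σ s t := by
  simp only [corr_eq, prBox, sgn_zero, sgn_one]; ring

lemma IsSignPattern.isBox_prBox {σ : Fin 2 → Fin 2 → ℝ} (hσ : IsSignPattern σ) :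
    IsBox (prBox σ) := by
  refine ⟨fun x y s t => ?_, fun s t => ?_, fun x s t t' => ?_, fun y t s s' => ?_⟩
  · rcases sgn_eq_one_or_eq_neg_one x with hx | hx <;>
      rcases sgn_eq_one_or_eq_neg_one y with hy | hy <;>
      rcases hσ.1 s t with h | h <;> norm_num [prBox, hx, hy, h]
  all_goals simp only [prBox, Fin.sum_univ_two, sgn_zero, sgn_one]; ring

lemma IsBox.CHSHk_sub_two_le {R : Box} (hR : IsBox R) {σ : Fin 2 → Fin 2 → ℝ}
    (hσ : IsSignPattern σ) {x y s t : Fin 2} (h : sgn x * sgn y * σ s t = 1) :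
    CHSHk σ R - 2 ≤ 4 * R x y s t := by
  have h0 := hR.1
  have e := hR.sum_eq_one
  have a := hR.marginal_fst
  have b := hR.marginal_snd
  have hp := hσ.2
  revert x y s t
  rw [CHSHk_eq]
  simp only [corr_eq, Fin.forall_fin_two, sgn_zero, sgn_one]
  rcases hσ.1 0 0 with h00 | h00 <;> rcases hσ.1 0 1 with h01 | h01 <;>
    rcases hσ.1 1 0 with h10 | h10 <;> rcases hσ.1 1 1 with h11 | h11 <;>
    rw [h00, h01, h10, h11] at hp ⊢ <;> norm_num at hp <;> norm_num <;> and_intros <;>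
    linarith [h0 0 0 0 0, h0 0 1 0 0, h0 1 0 0 0, h0 1 1 0 0,
      h0 0 0 0 1, h0 0 1 0 1, h0 1 0 0 1, h0 1 1 0 1,
      h0 0 0 1 0, h0 0 1 1 0, h0 1 0 1 0, h0 1 1 1 0,
      h0 0 0 1 1, h0 0 1 1 1, h0 1 0 1 1, h0 1 1 1 1,
      e 0 0, e 0 1, e 1 0, e 1 1, a 0 0, a 0 1, a 1 0, a 1 1, b 0 0, b 0 1, b 1 0, b 1 1]

lemma CHSHk_sub_smul_prBox_le {R : Box} (hR : ∀ s t, |corr R s t| ≤ 1)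
    {σ σ' : Fin 2 → Fin 2 → ℝ} (hσ : IsSignPattern σ) (hσ' : IsSignPattern σ') :
    CHSHk σ' R - (CHSHk σ R - 2) / 2 * CHSHk σ' (prBox σ) ≤ 2 * (1 - (CHSHk σ R - 2) / 2) := by
  have hc := fun s t => abs_le.1 (hR s t)
  have hp := hσ.2
  have hp' := hσ'.2
  simp only [CHSHk_eq, corr_prBox]
  rcases hσ.1 0 0 with h00 | h00 <;> rcases hσ.1 0 1 with h01 | h01 <;>
    rcases hσ.1 1 0 with h10 | h10 <;> rcases hσ.1 1 1 with h11 | h11 <;>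
    rw [h00, h01, h10, h11] at hp ⊢ <;> norm_num at hp <;>
    rcases hσ'.1 0 0 with g00 | g00 <;> rcases hσ'.1 0 1 with g01 | g01 <;>
    rcases hσ'.1 1 0 with g10 | g10 <;> rcases hσ'.1 1 1 with g11 | g11 <;>
    rw [g00, g01, g10, g11] at hp' ⊢ <;> norm_num at hp' <;>
    linarith [(hc 0 0).1, (hc 0 0).2, (hc 0 1).1, (hc 0 1).2,
      (hc 1 0).1, (hc 1 0).2, (hc 1 1).1, (hc 1 1).2]

lemma isBox_smul_add_smul {P Q : Box} (hP : IsBox P) (hQ : IsBox Q) {a b : ℝ} (hab : a + b = 1)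
    (h0 : ∀ x y s t, 0 ≤ (a • P + b • Q) x y s t) : IsBox (a • P + b • Q) := by
  refine ⟨h0, fun s t => ?_, fun x s t t' => ?_, fun y t s s' => ?_⟩ <;>
    simp only [Pi.add_apply, Pi.smul_apply, smul_eq_mul, Finset.sum_add_distrib,
      ← Finset.mul_sum]
  · rw [hP.2.1, hQ.2.1, mul_one, mul_one, hab]
  · rw [hP.2.2.1 x s t t', hQ.2.2.1 x s t t']
  · rw [hP.2.2.2 y t s s', hQ.2.2.2 y t s s']

lemma IsBox.exists_isFree_eq_smul_prBox_add_smul {R : Box} (hR : IsBox R)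
    {σ : Fin 2 → Fin 2 → ℝ} (hσ : IsSignPattern σ) (h4 : CHSHk σ R < 4) :
    ∃ L, IsFree L ∧
      R = ((CHSHk σ R - 2) / 2) • prBox σ + (1 - (CHSHk σ R - 2) / 2) • L := by
  set l := (CHSHk σ R - 2) / 2 with hl
  have hl1 : 0 < 1 - l := by linarith
  -- The remainder is `(R - l • prBox σ) / (1 - l)`.
  obtain ⟨c, hc0, hc⟩ : ∃ c, 0 < c ∧ c * (1 - l) = 1 :=
    ⟨(1 - l)⁻¹, inv_pos.2 hl1, inv_mul_cancel₀ hl1.ne'⟩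
  have hL0 : ∀ x y s t, 0 ≤ (c • R + (-(c * l)) • prBox σ) x y s t := fun x y s t => by
    have hpm : sgn x * sgn y * σ s t = 1 ∨ sgn x * sgn y * σ s t = -1 := by
      rcases sgn_eq_one_or_eq_neg_one x with hx | hx <;>
        rcases sgn_eq_one_or_eq_neg_one y with hy | hy <;>
        rcases hσ.1 s t with h | h <;> simp [hx, hy, h]
    have : l * prBox σ x y s t ≤ R x y s t := by
      rcases hpm with h | h
      · have := hR.CHSHk_sub_two_le hσ h
        simp only [prBox, h, hl]; linarith
      · simp only [prBox, h]; norm_num; exact hR.1 x y s t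
    have := mul_nonneg hc0.le (sub_nonneg.2 this)
    simp only [Pi.add_apply, Pi.smul_apply, smul_eq_mul]
    linarith
  refine ⟨c • R + (-(c * l)) • prBox σ,
    (isBox_smul_add_smul hR hσ.isBox_prBox (by linear_combination hc) hL0).isFree_of_CHSHk_le_two
      fun σ' hσ' => ?_, ?_⟩
  · rw [CHSHk_add_smul]
    have h := CHSHk_sub_smul_prBox_le (abs_corr_le_one hR.1 hR.2.1) hσ hσ'
    rw [← hl] at h
    have := mul_le_mul_of_nonneg_left h hc0.le
    linarith
  · funext x y s t
    simp only [Pi.add_apply, Pi.smul_apply, smul_eq_mul]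
    linear_combination (l * prBox σ x y s t - R x y s t) * hc

lemma IsLOSR.CHSHk_applyOp_le {τ : Op} (hτ : IsLOSR τ) {R : Box} (hR : IsBox R)
    {σ σ' : Fin 2 → Fin 2 → ℝ} (hσ : IsSignPattern σ) (hσ' : IsSignPattern σ')
    (h2 : 2 ≤ CHSHk σ R) : CHSHk σ' (applyOp τ R) ≤ CHSHk σ R := by
  rcases (hσ.CHSHk_le_four hR.1 hR.2.1).eq_or_lt with h4 | h4
  · rw [h4]
    exact hσ'.CHSHk_le_four (hτ.applyOp_nonneg hR.1) (hτ.sum_applyOp hR.2.1)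
  obtain ⟨L, hL, hRL⟩ := hR.exists_isFree_eq_smul_prBox_add_smul hσ h4
  have hPR := hσ.isBox_prBox
  have hPR4 := hσ'.CHSHk_le_four (hτ.applyOp_nonneg hPR.1) (hτ.sum_applyOp hPR.2.1)
  have hL2 := (hτ.isFree_applyOp hL).CHSHk_le_two hσ'
  generalize CHSHk σ R = C at hRL h2 h4 ⊢
  calc CHSHk σ' (applyOp τ R)
      = (C - 2) / 2 * CHSHk σ' (applyOp τ (prBox σ)) +
          (1 - (C - 2) / 2) * CHSHk σ' (applyOp τ L) := by
        rw [hRL, applyOp_smul_add_smul, CHSHk_add_smul]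
    _ ≤ (C - 2) / 2 * 4 + (1 - (C - 2) / 2) * 2 :=
        add_le_add (mul_le_mul_of_nonneg_left hPR4 (by linarith))
          (mul_le_mul_of_nonneg_left hL2 (by linarith))
    _ = C := by ring

lemma MCHSH_eq_of_forall_le {R : Box} {c : ℝ} (hmem : ∃ R', Conv R R' ∧ CHSH R' = c)
    (hle : ∀ R', Conv R R' → CHSH R' ≤ c) : MCHSH R = c := by
  obtain ⟨R', hR', rfl⟩ := hmem
  exact IsGreatest.csSup_eq ⟨⟨R', hR', rfl⟩, by rintro _ ⟨R'', h, rfl⟩; exact hle R'' h⟩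

/-- Closed form for `M_CHSH`: it equals 2 on free boxes and equals the uniquely violated
CHSH functional on nonfree boxes; equivalently, LOSR operations cannot increase a
violated CHSH functional. -/
theorem stmt_9 :
    (∀ R : Box, IsBox R → IsFree R → MCHSH R = 2) ∧
    (∀ (R : Box) (σ : Fin 2 → Fin 2 → ℝ), IsBox R → IsSignPattern σ →
      2 < CHSHk σ R → MCHSH R = CHSHk σ R) ∧
    (∀ (R : Box) (σ : Fin 2 → Fin 2 → ℝ) (τ : Op), IsBox R → IsSignPattern σ →
      2 < CHSHk σ R → IsLOSR τ → CHSHk σ (applyOp τ R) ≤ CHSHk σ R) := by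
  refine ⟨fun R hR hF => ?_, fun R σ hR hσ h2 => ?_,
    fun R σ τ hR hσ h2 hτ => hτ.CHSHk_applyOp_le hR hσ hσ h2.le⟩
  · refine MCHSH_eq_of_forall_le (exists_conv_CHSH_eq_two R hR.2.1) fun R' ⟨τ, hτ, hR'⟩ => ?_
    rw [← hR', CHSH_eq_CHSHk]
    exact (hτ.isFree_applyOp hF).CHSHk_le_two isSignPattern_chshPattern
  · refine MCHSH_eq_of_forall_le (hσ.exists_conv_CHSH_eq R) fun R' ⟨τ, hτ, hR'⟩ => ?_
    rw [← hR', CHSH_eq_CHSHk]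
    exact hτ.CHSHk_applyOp_le hR hσ isSignPattern_chshPattern h2.le

end
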